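/- arXiv:1809.05775 — 2 statements merged into one kernel-verified Lean document; each statement's English description precedes it below -/
import Mathlib

section
/- Let 1 ≤ i < k and let a₀ = (i+1)/(n+1), b₀ = (n-i)/(n+1), and for fixed t with −b₀ < t < a₀ set a = a₀ − t. Then lim_{ε→0⁺} [∫₀^{εa₀} r₁^{i-1} ∫₀^{b₀} r₂^{k-i-1}(r₁²+r₂²)^{(i-k)/2} dr₂ dr₁] / [∫₀^{εa} r₁^{i-1} ∫₀^{b} r₂^{k-i-1}(r₁²+r₂²)^{(i-k)/2} dr₂ dr₁] = (a₀/a)^i, where b = b₀ + t. -/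
/-!
The kernel `s ^ q * (r ^ 2 + s ^ 2) ^ (-(q + 1) / 2)` is homogeneous of degree `-1`, so the inner
integral over `[0, β]` equals `H (β / r)`, where
`H T = ∫ σ in 0..T, σ ^ q * (1 + σ ^ 2) ^ (-(q + 1) / 2)` satisfies `H T = log T + O(1)` as `T → ∞` because its integrand behaves like `1 / σ`. Integrating
`r ^ p * (log β - log r + O(1))` over `[0, x]` shows that the double integral is asymptotic to
`x ^ (p + 1) / (p + 1) * (-log x)` as `x → 0⁺`, whatever `β > 0` is. At `x = ε c` the factor
`-log (ε c)` is asymptotic to `-log ε`, so numerator and denominator differ asymptotically only by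
the factors `a₀ ^ (p + 1)` and `a ^ (p + 1)`; in the theorem `p = i - 1` and `q = k - i - 1`.
-/

open Real Filter Topology MeasureTheory Asymptotics Set intervalIntegral

namespace DualVolumeRatio

noncomputable def kernel (q : ℕ) (r s : ℝ) : ℝ := s ^ q * (r ^ 2 + s ^ 2) ^ (-((q : ℝ) + 1) / 2)

section Inner

variable (q : ℕ)

lemma rpow_sq_neg_succ_div_two {x : ℝ} (hx : 0 ≤ x) :
    (x ^ 2) ^ (-((q : ℝ) + 1) / 2) = (x ^ (q + 1))⁻¹ := by
  rw [← rpow_natCast x 2, ← rpow_mul hx, ← rpow_natCast, ← rpow_neg hx]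
  push_cast; ring_nf

lemma kernel_mul {r : ℝ} (hr : 0 < r) (σ : ℝ) : kernel q r (r * σ) = r⁻¹ * kernel q 1 σ := by
  have hsplit : r ^ 2 + (r * σ) ^ 2 = r ^ 2 * (1 + σ ^ 2) := by ring
  rw [kernel, kernel, hsplit, mul_rpow (by positivity) (by positivity),
    rpow_sq_neg_succ_div_two q hr.le, one_pow]
  field_simp
  ring

lemma continuous_kernel_one : Continuous (kernel q 1) :=
  (continuous_pow q).mul <| (continuous_const.add (continuous_pow 2)).rpow_const fun x ↦
    Or.inl (show (1 : ℝ) ^ 2 + x ^ 2 ≠ 0 by positivity)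

lemma kernel_one_le_one {σ : ℝ} (h₀ : 0 ≤ σ) (h₁ : σ ≤ 1) : kernel q 1 σ ≤ 1 := by
  have hpow : (1 + σ ^ 2) ^ (-((q : ℝ) + 1) / 2) ≤ 1 :=
    rpow_le_one_of_one_le_of_nonpos (by nlinarith) (by linarith [q.cast_nonneg (α := ℝ)])
  rw [kernel, one_pow]
  exact mul_le_one₀ (pow_le_one₀ h₀ h₁) (rpow_nonneg (by positivity) _) hpow

lemma kernel_one_le_inv {σ : ℝ} (hσ : 0 < σ) : kernel q 1 σ ≤ σ⁻¹ := by
  have hpow : (1 + σ ^ 2) ^ (-((q : ℝ) + 1) / 2) ≤ (σ ^ 2) ^ (-((q : ℝ) + 1) / 2) :=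
    rpow_le_rpow_of_nonpos (by positivity) (by linarith) (by linarith [q.cast_nonneg (α := ℝ)])
  calc kernel q 1 σ ≤ σ ^ q * (σ ^ (q + 1))⁻¹ := by
        rw [kernel, one_pow, ← rpow_sq_neg_succ_div_two q hσ.le]; gcongr
    _ = σ⁻¹ := by field_simp; ring

lemma one_div_sub_le_kernel_one {σ : ℝ} (hσ : 0 ≤ σ) :
    1 / (1 + σ) - q / (1 + σ) ^ 2 ≤ kernel q 1 σ := by
  have hσ₁ : 0 < 1 + σ := by linarith
  have bernoulli : 1 - (q : ℝ) / (1 + σ) ≤ (σ / (1 + σ)) ^ q := by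
    have h := one_add_mul_le_pow (a := -(1 / (1 + σ))) (by
      have : 1 / (1 + σ) ≤ 1 := by rw [div_le_one hσ₁]; linarith
      linarith) q
    rw [show 1 + -(1 / (1 + σ)) = σ / (1 + σ) by field_simp; ring] at h
    linarith [show 1 + q * -(1 / (1 + σ)) = 1 - (q : ℝ) / (1 + σ) by ring]
  have hpow : ((1 + σ) ^ 2) ^ (-((q : ℝ) + 1) / 2) ≤ (1 + σ ^ 2) ^ (-((q : ℝ) + 1) / 2) :=
    rpow_le_rpow_of_nonpos (by positivity) (by nlinarith) (by linarith [q.cast_nonneg (α := ℝ)])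
  rw [rpow_sq_neg_succ_div_two q hσ₁.le] at hpow
  calc 1 / (1 + σ) - q / (1 + σ) ^ 2 = (1 - (q : ℝ) / (1 + σ)) / (1 + σ) := by field_simp
    _ ≤ (σ / (1 + σ)) ^ q / (1 + σ) := by gcongr
    _ = σ ^ q * ((1 + σ) ^ (q + 1))⁻¹ := by rw [div_pow]; field_simp; ring
    _ ≤ kernel q 1 σ := by rw [kernel, one_pow]; gcongr

noncomputable def innerIntegral (r β : ℝ) : ℝ := ∫ s in (0 : ℝ)..β, kernel q r s

lemma innerIntegral_one_le {T : ℝ} (hT : 1 ≤ T) : innerIntegral q 1 T ≤ log T + 1 := by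
  have hint : ∀ a b : ℝ, IntervalIntegrable (kernel q 1) volume a b :=
    fun a b ↦ (continuous_kernel_one q).intervalIntegrable a b
  have head : ∫ σ in (0 : ℝ)..1, kernel q 1 σ ≤ 1 := by
    simpa using integral_mono_on zero_le_one (hint 0 1) intervalIntegrable_const
      fun σ hσ ↦ kernel_one_le_one q hσ.1 hσ.2
  have tail : ∫ σ in (1 : ℝ)..T, kernel q 1 σ ≤ log T := by
    have hinv : IntervalIntegrable (fun σ : ℝ ↦ σ⁻¹) volume 1 T :=
      intervalIntegrable_inv (fun σ hσ ↦ by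
        rw [uIcc_of_le hT] at hσ; linarith [hσ.1]) continuousOn_id
    simpa [integral_inv_of_pos one_pos (by linarith : (0 : ℝ) < T)] using
      integral_mono_on hT (hint 1 T) hinv fun σ hσ ↦ kernel_one_le_inv q (by linarith [hσ.1])
  rw [innerIntegral, ← integral_add_adjacent_intervals (hint 0 1) (hint 1 T)]
  linarith

lemma log_sub_le_innerIntegral_one {T : ℝ} (hT : 0 < T) : log T - q ≤ innerIntegral q 1 T := by
  let f : ℝ → ℝ := fun σ ↦ 1 / (1 + σ) - q / (1 + σ) ^ 2
  have hderiv : ∀ σ ∈ uIcc 0 T,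
      HasDerivAt (fun σ : ℝ ↦ log (1 + σ) + q * (1 + σ)⁻¹) (f σ) σ := by
    intro σ hσ
    rw [uIcc_of_le hT.le] at hσ
    have hσ₁ : 1 + σ ≠ 0 := by linarith [hσ.1]
    have h := (((hasDerivAt_id σ).const_add 1).log hσ₁).add
      ((((hasDerivAt_id σ).const_add 1).inv hσ₁).const_mul (q : ℝ))
    exact h.congr_deriv (by simp only [f, id]; field_simp; ring)
  have hf : IntervalIntegrable f volume 0 T := by
    refine ContinuousOn.intervalIntegrable fun σ hσ ↦ ?_
    rw [uIcc_of_le hT.le] at hσ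
    have hσ₁ : 1 + σ ≠ 0 := by linarith [hσ.1]
    exact ((continuousAt_const.div (continuousAt_const.add continuousAt_id) hσ₁).sub
      (continuousAt_const.div ((continuousAt_const.add continuousAt_id).pow 2)
        (pow_ne_zero 2 hσ₁))).continuousWithinAt
  have hlower := integral_mono_on hT.le hf ((continuous_kernel_one q).intervalIntegrable 0 T)
    fun σ hσ ↦ one_div_sub_le_kernel_one q hσ.1
  rw [integral_eq_sub_of_hasDerivAt hderiv hf] at hlower
  have hlog : log T ≤ log (1 + T) := log_le_log hT (by linarith)
  have hq : 0 ≤ (q : ℝ) * (1 + T)⁻¹ := by positivity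
  simp only [add_zero, log_one, inv_one, mul_one] at hlower
  rw [innerIntegral]
  linarith

lemma abs_innerIntegral_one_sub_log_le {T : ℝ} (hT : 1 ≤ T) :
    |innerIntegral q 1 T - log T| ≤ q + 1 := by
  rw [abs_sub_le_iff]
  constructor
  · linarith [innerIntegral_one_le q hT, q.cast_nonneg (α := ℝ)]
  · linarith [log_sub_le_innerIntegral_one q (by linarith : (0 : ℝ) < T)]

lemma innerIntegral_eq_innerIntegral_one {r : ℝ} (hr : 0 < r) (β : ℝ) :
    innerIntegral q r β = innerIntegral q 1 (β / r) := by
  have h := integral_comp_mul_left (a := 0) (b := β / r) (kernel q r) hr.ne'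
  simp only [kernel_mul q hr, intervalIntegral.integral_const_mul, mul_zero,
    mul_div_cancel₀ β hr.ne', smul_eq_mul] at h
  rw [innerIntegral, innerIntegral]
  exact (mul_left_cancel₀ (inv_ne_zero hr.ne') h).symm

lemma continuousOn_innerIntegral (β : ℝ) :
    ContinuousOn (fun r ↦ innerIntegral q r β) (Ioi 0) := by
  have hprim : Continuous (innerIntegral q 1) :=
    continuous_primitive (fun a b ↦ (continuous_kernel_one q).intervalIntegrable a b) 0
  refine ContinuousOn.congr (f := fun r ↦ innerIntegral q 1 (β / r)) ?_
    fun r hr ↦ innerIntegral_eq_innerIntegral_one q hr β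
  exact hprim.comp_continuousOn (continuousOn_const.div continuousOn_id
    fun r hr ↦ (mem_Ioi.1 hr).ne')

lemma abs_innerIntegral_sub_log_le {r β : ℝ} (hr : 0 < r) (hrβ : r ≤ β) :
    |innerIntegral q r β - (log β - log r)| ≤ q + 1 := by
  rw [innerIntegral_eq_innerIntegral_one q hr, ← log_div (by linarith) hr.ne']
  exact abs_innerIntegral_one_sub_log_le q ((one_le_div hr).2 hrβ)

end Inner

lemma integral_pow_mul_sub_log (p : ℕ) (c : ℝ) {x : ℝ} (hx : 0 ≤ x) :
    ∫ r in (0 : ℝ)..x, r ^ p * (c - log r)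
      = x ^ (p + 1) / (p + 1) * (c - log x + 1 / (p + 1)) := by
  let G : ℝ → ℝ := fun r ↦ r ^ (p + 1) / (p + 1) * (c - log r + 1 / (p + 1))
  have hGcont : Continuous G := by
    have hform : G = fun r ↦
        (c + 1 / (p + 1)) / (p + 1) * r ^ (p + 1) - r ^ p * (r * log r) / (p + 1) := by
      funext r; simp only [G]; ring
    rw [hform]
    fun_prop (disch := exact continuous_mul_log)
  have hderiv : ∀ r ∈ Ioo 0 x, HasDerivAt G (r ^ p * (c - log r)) r := by
    intro r hr
    have h := ((hasDerivAt_pow (p + 1) r).div_const ((p : ℝ) + 1)).mul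
      (((hasDerivAt_log hr.1.ne').const_sub c).add_const (1 / ((p : ℝ) + 1)))
    refine h.congr_deriv ?_
    have hr₀ : r ≠ 0 := hr.1.ne'
    push_cast
    field_simp
    ring
  have hint : IntervalIntegrable (fun r ↦ r ^ p * (c - log r)) volume 0 x :=
    (intervalIntegrable_const.sub intervalIntegrable_log').continuousOn_mul
      (continuous_pow p).continuousOn
  rw [integral_eq_sub_of_hasDerivAt_of_le hx hGcont.continuousOn hderiv hint]
  simp [G]

noncomputable def outerIntegral (p q : ℕ) (x β : ℝ) : ℝ :=
  ∫ r in (0 : ℝ)..x, r ^ p * innerIntegral q r β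

lemma abs_outerIntegral_sub_le (p q : ℕ) {x β : ℝ} (hx : 0 < x) (hxβ : x ≤ β) :
    |outerIntegral p q x β - x ^ (p + 1) / (p + 1) * (log β - log x + 1 / (p + 1))|
      ≤ (q + 1) * (x ^ (p + 1) / (p + 1)) := by
  let D : ℝ → ℝ := fun r ↦ r ^ p * (innerIntegral q r β - (log β - log r))
  have hDle : ∀ r ∈ Ioc 0 x, ‖D r‖ ≤ (q + 1) * r ^ p := fun r hr ↦ by
    rw [Real.norm_eq_abs, abs_mul, abs_of_nonneg (pow_nonneg hr.1.le p), mul_comm]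
    exact mul_le_mul_of_nonneg_right (abs_innerIntegral_sub_log_le q hr.1 (hr.2.trans hxβ))
      (pow_nonneg hr.1.le p)
  have hbound : IntervalIntegrable (fun r : ℝ ↦ (q + 1) * r ^ p) volume 0 x :=
    (continuous_const.mul (continuous_pow p)).intervalIntegrable 0 x
  have hDint : IntervalIntegrable D volume 0 x := by
    refine hbound.mono_fun' ?_ ?_
    · rw [uIoc_of_le hx.le]
      refine ContinuousOn.aestronglyMeasurable ?_ measurableSet_Ioc
      exact (continuous_pow p).continuousOn.mul
        (((continuousOn_innerIntegral q β).mono Ioc_subset_Ioi_self).sub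
          (continuousOn_const.sub (continuousOn_log.mono fun r hr ↦ hr.1.ne')))
    · rw [uIoc_of_le hx.le, EventuallyLE, ae_restrict_iff' measurableSet_Ioc]
      exact Eventually.of_forall hDle
  have hlog : IntervalIntegrable (fun r ↦ r ^ p * (log β - log r)) volume 0 x :=
    (intervalIntegrable_const.sub intervalIntegrable_log').continuousOn_mul
      (continuous_pow p).continuousOn
  have hsplit : outerIntegral p q x β
      = (∫ r in (0 : ℝ)..x, D r) + ∫ r in (0 : ℝ)..x, r ^ p * (log β - log r) := by
    rw [outerIntegral, ← integral_add hDint hlog]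
    congr 1 with r
    ring
  rw [hsplit, integral_pow_mul_sub_log p _ hx.le, add_sub_cancel_right]
  calc |∫ r in (0 : ℝ)..x, D r| ≤ ∫ r in (0 : ℝ)..x, (q + 1) * r ^ p :=
        norm_integral_le_of_norm_le hx.le (Eventually.of_forall fun r hr ↦ hDle r hr) hbound
    _ = (q + 1) * (x ^ (p + 1) / (p + 1)) := by simp [integral_pow]

lemma isLittleO_const_neg_log (c : ℝ) : (fun _ : ℝ ↦ c) =o[𝓝[>] 0] fun x ↦ -log x :=
  isLittleO_const_left.2 <| Or.inr <|
    tendsto_norm_atTop_atTop.comp (tendsto_neg_atBot_atTop.comp tendsto_log_nhdsGT_zero)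

lemma outerIntegral_isEquivalent (p q : ℕ) {β : ℝ} (hβ : 0 < β) :
    (fun x ↦ outerIntegral p q x β) ~[𝓝[>] 0] fun x ↦ x ^ (p + 1) / (p + 1) * -log x := by
  have hO : (fun x ↦ outerIntegral p q x β - x ^ (p + 1) / (p + 1) * -log x)
      =O[𝓝[>] 0] fun x ↦ x ^ (p + 1) / (p + 1) * 1 := by
    refine IsBigO.of_bound (q + 1 + |log β + 1 / (p + 1)|) ?_
    filter_upwards [Ioo_mem_nhdsGT hβ] with x hx
    have hx₀ : 0 ≤ x ^ (p + 1) / (p + 1) := by have := hx.1.le; positivity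
    rw [Real.norm_eq_abs, Real.norm_eq_abs, mul_one, abs_of_nonneg hx₀]
    calc |outerIntegral p q x β - x ^ (p + 1) / (p + 1) * -log x|
        = |(outerIntegral p q x β - x ^ (p + 1) / (p + 1) * (log β - log x + 1 / (p + 1)))
            + x ^ (p + 1) / (p + 1) * (log β + 1 / (p + 1))| := by ring_nf
      _ ≤ (q + 1) * (x ^ (p + 1) / (p + 1))
            + x ^ (p + 1) / (p + 1) * |log β + 1 / (p + 1)| := by
        refine (abs_add_le _ _).trans (add_le_add (abs_outerIntegral_sub_le p q hx.1 hx.2.le) ?_)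
        rw [abs_mul, abs_of_nonneg hx₀]
      _ = _ := by ring
  exact hO.trans_isLittleO ((isBigO_refl _ _).mul_isLittleO (isLittleO_const_neg_log 1))

lemma outerIntegral_mul_isEquivalent (p q : ℕ) {c β : ℝ} (hc : 0 < c) (hβ : 0 < β) :
    (fun ε ↦ outerIntegral p q (ε * c) β)
      ~[𝓝[>] 0] fun ε ↦ c ^ (p + 1) * (ε ^ (p + 1) / (p + 1) * -log ε) := by
  have hscale : Tendsto (fun ε ↦ ε * c) (𝓝[>] 0) (𝓝[>] 0) := by
    refine tendsto_nhdsWithin_iff.2 ⟨?_, ?_⟩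
    · simpa using ((continuous_mul_const c).tendsto 0).mono_left nhdsWithin_le_nhds
    · filter_upwards [self_mem_nhdsWithin] with ε hε using mul_pos hε hc
  have hlog : (fun ε ↦ -log (ε * c)) ~[𝓝[>] 0] fun ε ↦ -log ε := by
    refine (isLittleO_const_neg_log (-log c)).congr' ?_ EventuallyEq.rfl
    filter_upwards [self_mem_nhdsWithin] with ε hε
    simp [log_mul (ne_of_gt hε) hc.ne']
  refine ((outerIntegral_isEquivalent p q hβ).comp_tendsto hscale).trans ?_
  have hmul := (IsEquivalent.refl (u := fun ε : ℝ ↦ c ^ (p + 1) * (ε ^ (p + 1) / (p + 1)))).mul hlog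
  refine (hmul.congr_left (.of_forall fun ε ↦ ?_)).congr_right (.of_forall fun ε ↦ ?_) <;>
    simp only [Pi.mul_apply, Function.comp_apply] <;> ring

lemma tendsto_outerIntegral_div (p q : ℕ) {c₁ β₁ c₂ β₂ : ℝ} (hc₁ : 0 < c₁) (hβ₁ : 0 < β₁)
    (hc₂ : 0 < c₂) (hβ₂ : 0 < β₂) :
    Tendsto (fun ε ↦ outerIntegral p q (ε * c₁) β₁ / outerIntegral p q (ε * c₂) β₂) (𝓝[>] 0)
      (𝓝 ((c₁ / c₂) ^ (p + 1))) := by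
  have h := (outerIntegral_mul_isEquivalent p q hc₁ hβ₁).div
    (outerIntegral_mul_isEquivalent p q hc₂ hβ₂)
  refine h.symm.tendsto_nhds (tendsto_const_nhds.congr' ?_)
  filter_upwards [Ioo_mem_nhdsGT one_pos] with ε hε
  have hlog : 0 < -log ε := neg_pos.2 (log_neg hε.1 hε.2)
  have hε₀ := hε.1
  rw [Pi.div_apply, div_pow, mul_div_mul_right _ _ (by positivity)]

end DualVolumeRatio

open DualVolumeRatio in
theorem sharpness_double_integral_limit (n k i : ℕ) (hi : 1 ≤ i) (hik : i < k) (hkn : k ≤ n)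
    (t : ℝ) (ht1 : -(((n : ℝ) - i) / ((n : ℝ) + 1)) < t) (ht2 : t < ((i : ℝ) + 1) / ((n : ℝ) + 1)) :
    Filter.Tendsto (fun ε : ℝ =>
        (∫ r₁ in (0 : ℝ)..(ε * (((i : ℝ) + 1) / ((n : ℝ) + 1))),
            r₁ ^ (i - 1) *
              ∫ r₂ in (0 : ℝ)..(((n : ℝ) - i) / ((n : ℝ) + 1)),
                r₂ ^ (k - i - 1) * (r₁ ^ 2 + r₂ ^ 2) ^ (((i : ℝ) - k) / 2)) /
          (∫ r₁ in (0 : ℝ)..(ε * (((i : ℝ) + 1) / ((n : ℝ) + 1) - t)),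
            r₁ ^ (i - 1) *
              ∫ r₂ in (0 : ℝ)..(((n : ℝ) - i) / ((n : ℝ) + 1) + t),
                r₂ ^ (k - i - 1) * (r₁ ^ 2 + r₂ ^ 2) ^ (((i : ℝ) - k) / 2)))
      (nhdsWithin 0 (Set.Ioi 0))
      (nhds (((((i : ℝ) + 1) / ((n : ℝ) + 1)) / (((i : ℝ) + 1) / ((n : ℝ) + 1) - t)) ^ i)) := by
  have hexp : ((i : ℝ) - k) / 2 = -(((k - i - 1 : ℕ) : ℝ) + 1) / 2 := by
    rw [Nat.cast_sub (by omega), Nat.cast_sub hik.le]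
    ring
  have hin : (i : ℝ) < n := by exact_mod_cast hik.trans_le hkn
  have ha₀ : 0 < ((i : ℝ) + 1) / ((n : ℝ) + 1) := by positivity
  have hb₀ : 0 < ((n : ℝ) - i) / ((n : ℝ) + 1) := div_pos (by linarith) (by positivity)
  have hlim := tendsto_outerIntegral_div (i - 1) (k - i - 1) ha₀ hb₀ (sub_pos.2 ht2)
    (by linarith : 0 < ((n : ℝ) - i) / ((n : ℝ) + 1) + t)
  rw [Nat.sub_add_cancel hi] at hlim
  simp only [hexp]
  exact hlim
end

section
/- For 2 ≤ i, one has the asymptotic upper bound ∫₀^{i/(n+1)} ((i/(n+1)) − u)^{i-1} (ln(ε²u²+1) − 2ln ε − 2 ln u) du = −(2 ln ε / i)(i/(n+1))^i (1 + o(1)) as ε → 0⁺. -/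
open MeasureTheory

open Real Filter intervalIntegral in
lemma log_intervalIntegrable_aux {c : ℝ} (hc : 0 < c) (hc1 : c ≤ 1) :
    IntervalIntegrable Real.log volume 0 c := by
  have hbound : IntervalIntegrable (fun u : ℝ => 2 * u ^ (-(1/2) : ℝ)) volume 0 c :=
    (intervalIntegrable_rpow' (by norm_num)).const_mul 2
  refine hbound.mono_fun (Real.measurable_log.aestronglyMeasurable.restrict) ?_
  refine (ae_restrict_iff' measurableSet_uIoc).mpr (ae_of_all _ fun x hx => ?_)
  rw [Set.uIoc_of_le hc.le] at hx
  obtain ⟨hx0, hxc⟩ := hx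
  have hx1 : x ≤ 1 := hxc.trans hc1
  have hrp : (0:ℝ) < x ^ (-(1/2) : ℝ) := Real.rpow_pos_of_pos hx0 _
  have h1 : Real.log (x ^ (-(1/2) : ℝ)) = (-(1/2)) * Real.log x := Real.log_rpow hx0 _
  have h2 : Real.log (x ^ (-(1/2) : ℝ)) ≤ x ^ (-(1/2) : ℝ) :=
    (Real.log_le_sub_one_of_pos hrp).trans (by linarith)
  have hlogneg : Real.log x ≤ 0 := Real.log_nonpos hx0.le hx1
  simp only [Real.norm_eq_abs]
  rw [abs_of_nonpos hlogneg, abs_of_nonneg (by positivity)]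
  nlinarith

open Real Filter intervalIntegral

theorem log_integral_asymptotic (n i : ℕ) (hi : 2 ≤ i) (hin : i ≤ n) :
    Filter.Tendsto (fun ε : ℝ =>
        (∫ u in (0 : ℝ)..((i : ℝ) / ((n : ℝ) + 1)),
            ((i : ℝ) / ((n : ℝ) + 1) - u) ^ (i - 1) *
              (Real.log (ε ^ 2 * u ^ 2 + 1) - 2 * Real.log ε - 2 * Real.log u)) /
          (-(2 * Real.log ε / (i : ℝ)) * ((i : ℝ) / ((n : ℝ) + 1)) ^ i))
      (nhdsWithin 0 (Set.Ioi 0)) (nhds 1) := by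
  set c : ℝ := (i : ℝ) / ((n : ℝ) + 1) with hc_def
  have hn1 : (0:ℝ) < (n:ℝ) + 1 := by positivity
  have hipos : (0:ℝ) < (i:ℝ) := by exact_mod_cast lt_of_lt_of_le two_pos hi
  have hc : 0 < c := div_pos hipos hn1
  have hc1 : c ≤ 1 := by
    rw [div_le_one hn1]
    have : (i:ℝ) ≤ (n:ℝ) := Nat.cast_le.mpr hin
    linarith
  -- integrabilities
  have hlog : IntervalIntegrable Real.log volume 0 c := log_intervalIntegrable_aux hc hc1
  have hcont : Continuous fun u : ℝ => (c - u) ^ (i - 1) :=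
    (continuous_const.sub continuous_id).pow _
  have hB : IntervalIntegrable (fun u => (c - u) ^ (i - 1) * Real.log u) volume 0 c :=
    hlog.continuousOn_mul hcont.continuousOn
  set B : ℝ := ∫ u in (0:ℝ)..c, (c - u) ^ (i - 1) * Real.log u with hB_def
  have hA : ∀ ε : ℝ, IntervalIntegrable
      (fun u => (c - u) ^ (i - 1) * Real.log (ε ^ 2 * u ^ 2 + 1)) volume 0 c := by
    intro ε
    refine (hcont.mul (Continuous.log ?_ fun u => by positivity)).intervalIntegrable _ _
    exact (continuous_const.mul (continuous_pow 2)).add continuous_const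
  set Af : ℝ → ℝ := fun ε => ∫ u in (0:ℝ)..c, (c - u) ^ (i - 1) * Real.log (ε ^ 2 * u ^ 2 + 1)
    with hAf_def
  -- base power integral
  have hpow : (∫ u in (0:ℝ)..c, (c - u) ^ (i - 1)) = c ^ i / i := by
    have h1 : (∫ u in (0:ℝ)..c, (c - u) ^ (i - 1)) = ∫ x in (c - c)..(c - 0), x ^ (i - 1) :=
      intervalIntegral.integral_comp_sub_left (fun x => x ^ (i - 1)) c
    rw [h1]
    have h2 : i - 1 + 1 = i := Nat.sub_add_cancel (show 1 ≤ i by omega)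
    simp only [sub_self, sub_zero, integral_pow, h2]
    rw [show ((i - 1 : ℕ) : ℝ) + 1 = (i:ℝ) by exact_mod_cast h2,
      zero_pow (show i ≠ 0 by omega)]
    ring
  -- split the integral
  have hsplit : ∀ ε : ℝ,
      (∫ u in (0:ℝ)..c, (c - u) ^ (i - 1) *
        (Real.log (ε ^ 2 * u ^ 2 + 1) - 2 * Real.log ε - 2 * Real.log u))
      = Af ε - 2 * Real.log ε * (c ^ i / i) - 2 * B := by
    intro ε
    have hcongr : (∫ u in (0:ℝ)..c, (c - u) ^ (i - 1) *
        (Real.log (ε ^ 2 * u ^ 2 + 1) - 2 * Real.log ε - 2 * Real.log u))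
      = ∫ u in (0:ℝ)..c, (((c - u) ^ (i - 1) * Real.log (ε ^ 2 * u ^ 2 + 1)
          - 2 * Real.log ε * (c - u) ^ (i - 1)) - 2 * ((c - u) ^ (i - 1) * Real.log u)) :=
      intervalIntegral.integral_congr fun u _ => by ring
    rw [hcongr, intervalIntegral.integral_sub
        ((hA ε).sub ((hcont.intervalIntegrable 0 c).const_mul _)) (hB.const_mul 2),
      intervalIntegral.integral_sub (hA ε) ((hcont.intervalIntegrable 0 c).const_mul _),
      intervalIntegral.integral_const_mul, intervalIntegral.integral_const_mul, hpow]
  -- bounds on Af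
  have hA1 : IntervalIntegrable (fun u => (c - u) ^ (i - 1) * Real.log (u ^ 2 + 1))
      volume 0 c := by
    refine (hcont.mul (Continuous.log ?_ fun u => by positivity)).intervalIntegrable _ _
    exact (continuous_pow 2).add continuous_const
  set A1 : ℝ := ∫ u in (0:ℝ)..c, (c - u) ^ (i - 1) * Real.log (u ^ 2 + 1) with hA1_def
  have hAnonneg : ∀ ε : ℝ, 0 ≤ Af ε := by
    intro ε
    refine intervalIntegral.integral_nonneg hc.le fun u hu => ?_
    exact mul_nonneg (pow_nonneg (by linarith [hu.2]) _) (Real.log_nonneg (by nlinarith))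
  have hAle : ∀ ε : ℝ, ε ∈ Set.Ioo (0:ℝ) 1 → Af ε ≤ A1 := by
    intro ε hε
    refine intervalIntegral.integral_mono_on hc.le (hA ε) hA1 fun u hu => ?_
    have hcu : 0 ≤ c - u := by simpa using hu.2
    have hle : ε ^ 2 * u ^ 2 + 1 ≤ u ^ 2 + 1 := by
      have hε2 : ε ^ 2 ≤ 1 := by nlinarith [hε.1.le, hε.2.le]
      nlinarith [mul_le_mul_of_nonneg_right hε2 (sq_nonneg u)]
    exact mul_le_mul_of_nonneg_left
      (Real.log_le_log (by positivity) hle) (by positivity)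
  -- denominator tendsto atTop
  set D : ℝ → ℝ := fun ε => -(2 * Real.log ε / i) * c ^ i with hD_def
  have hk : -(2 * c ^ i / i) < 0 := by
    have : 0 < 2 * c ^ i / i := by positivity
    linarith
  have hDtop : Filter.Tendsto D (nhdsWithin 0 (Set.Ioi 0)) Filter.atTop := by
    have h1 : Filter.Tendsto (fun ε : ℝ => Real.log ε * (-(2 * c ^ i / i)))
        (nhdsWithin 0 (Set.Ioi 0)) Filter.atTop :=
      Real.tendsto_log_nhdsGT_zero.atBot_mul_const_of_neg hk
    refine h1.congr fun ε => ?_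
    simp only [hD_def]
    ring
  -- the remainder term tends to 0
  have hR0 : Filter.Tendsto (fun ε => (Af ε - 2 * B) / D ε)
      (nhdsWithin 0 (Set.Ioi 0)) (nhds 0) := by
    have hMD : Filter.Tendsto (fun ε => (A1 + 2 * |B|) / D ε)
        (nhdsWithin 0 (Set.Ioi 0)) (nhds 0) :=
      tendsto_const_nhds.div_atTop hDtop
    refine squeeze_zero_norm' ?_ hMD
    filter_upwards [Ioo_mem_nhdsGT_of_mem (Set.left_mem_Ico.mpr zero_lt_one),
      hDtop.eventually_ge_atTop 1] with ε hε hD1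
    have hDpos : 0 < D ε := lt_of_lt_of_le zero_lt_one hD1
    have hRle : |Af ε - 2 * B| ≤ A1 + 2 * |B| := by
      have h1 : |Af ε - 2 * B| ≤ |Af ε| + |2 * B| := abs_sub _ _
      have h2 : |Af ε| = Af ε := abs_of_nonneg (hAnonneg ε)
      have h3 : |2 * B| = 2 * |B| := by rw [abs_mul]; simp
      have h4 : Af ε ≤ A1 := hAle ε hε
      linarith
    rw [Real.norm_eq_abs, abs_div, abs_of_pos hDpos]
    gcongr
  -- conclude
  have hfinal : Filter.Tendsto (fun ε => 1 + (Af ε - 2 * B) / D ε)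
      (nhdsWithin 0 (Set.Ioi 0)) (nhds 1) := by
    have := tendsto_const_nhds (x := (1:ℝ)) (f := nhdsWithin (0:ℝ) (Set.Ioi 0)) |>.add hR0
    simpa using this
  refine hfinal.congr' ?_
  filter_upwards [hDtop.eventually_ge_atTop 1] with ε hD1
  have hDpos : (0:ℝ) < D ε := by linarith
  have hDne : D ε ≠ 0 := hDpos.ne'
  rw [hsplit ε]
  have hNum : Af ε - 2 * Real.log ε * (c ^ i / i) - 2 * B = (Af ε - 2 * B) + D ε := by
    simp only [hD_def]; ring
  have hDeq : -(2 * Real.log ε / (i:ℝ)) * c ^ i = D ε := rfl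
  rw [hNum, hDeq, add_div, div_self hDne]
  ring
end
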